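/- Fix real constants m > 0, k ≠ 0, M > 0, set Ñ₁ = 1, Ñ₂ = M, Ñ₃ = 1, and let i, μ be natural numbers. On the open set {I₁,I₂,I₃ > 0} ⊂ ℝ⁶ with coordinates (I₁,I₂,I₃,φ¹,φ²,φ³), define the vector fields X_i = (mk²/I₃^{i+3}) ∂/∂φ³ and Γ_{iμ} = (1/(3+i)) Σ_{j=1}^3 (Ñ_j^μ / I_j^{μ−1}) (∂/∂I_j + ∂/∂φ^j). Then Γ_{iμ} is a master symmetry of degree 1 for X_i: the Lie brackets of vector fields satisfy [X_i, Γ_{iμ}] = X_{i+μ}, where X_{i+μ} = (mk²/I₃^{μ+i+3}) ∂/∂φ³, and [X_i, X_{i+μ}] = 0. -/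

import Mathlib

open scoped BigOperators

/-- Phase space with Delaunay-type coordinates `z.1 = (I₁,I₂,I₃)` and
angles `z.2 = (φ¹,φ²,φ³)`. -/
abbrev PhaseSpace := (Fin 3 → ℝ) × (Fin 3 → ℝ)

/-- Lie bracket of vector fields:
`[X,Y](z) = (DY)(z)·X(z) − (DX)(z)·Y(z)`. -/
noncomputable def lieB (X Y : PhaseSpace → PhaseSpace) (z : PhaseSpace) : PhaseSpace :=
  fderiv ℝ Y z (X z) - fderiv ℝ X z (Y z)

/-- The constants `Ñ₁ = 1, Ñ₂ = M, Ñ₃ = 1`. -/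
noncomputable def Ntil (M : ℝ) : Fin 3 → ℝ := ![1, M, 1]

/-- The dynamical symmetries `X_n = (mk²/I₃^{n+3}) ∂/∂φ³`. -/
noncomputable def Xvf (m k : ℝ) (n : ℕ) (z : PhaseSpace) : PhaseSpace :=
  (0, Pi.single 2 (m * k ^ 2 / (z.1 2) ^ (n + 3)))

/-- The master symmetries
`Γ_{iμ} = (1/(3+i)) Σ_j (Ñ_j^μ / I_j^{μ−1}) (∂/∂I_j + ∂/∂φ^j)`. -/
noncomputable def Gam (M : ℝ) (i μ : ℕ) (z : PhaseSpace) : PhaseSpace :=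
  ((fun j => (1 / (3 + (i : ℝ))) * ((Ntil M j) ^ μ / (z.1 j) ^ ((μ : ℝ) - 1))),
   (fun j => (1 / (3 + (i : ℝ))) * ((Ntil M j) ^ μ / (z.1 j) ^ ((μ : ℝ) - 1))))

/-! Both `X_n` and `Γ_{iμ}` depend only on the actions `I`, and `X_n` has no `∂/∂I` component,
so every term `D(·)·X_n` of the brackets vanishes. Hence `[X_i, X_{i+μ}] = 0`, and
`[X_i, Γ_{iμ}] = -(DX_i)·Γ_{iμ}` only involves `∂/∂I₃ (mk²/I₃^{i+3}) = -(i+3)mk²/I₃^{i+4}` and the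
`∂/∂I₃`-component `I₃^{1-μ}/(3+i)` of `Γ_{iμ}`, whose factor `1/(3+i)` cancels `i+3`. -/

section
variable {𝕜 E F G : Type*} [NontriviallyNormedField 𝕜] [NormedAddCommGroup E] [NormedSpace 𝕜 E]
  [NormedAddCommGroup F] [NormedSpace 𝕜 F] [NormedAddCommGroup G] [NormedSpace 𝕜 G]

theorem fderiv_comp_fst_apply {g : E → G} {z : E × F} (hg : DifferentiableAt 𝕜 g z.1)
    (v : E × F) : fderiv 𝕜 (fun p : E × F => g p.1) z v = fderiv 𝕜 g z.1 v.1 :=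
  DFunLike.congr_fun (hg.hasFDerivAt.comp z hasFDerivAt_fst).fderiv v

end

theorem hasDerivAt_div_pow (c : ℝ) (n : ℕ) {t : ℝ} (ht : t ≠ 0) :
    HasDerivAt (fun t => c / t ^ n) (-(n * c) / t ^ (n + 1)) t := by
  refine ((hasDerivAt_const t c).fun_div (hasDerivAt_pow n t) (pow_ne_zero n ht)).congr_deriv ?_
  rcases n with _ | n
  · simp
  · simp only [Nat.add_sub_cancel]
    field_simp
    push_cast
    ring

section
variable {ι F : Type*} [Fintype ι] [DecidableEq ι] [NormedAddCommGroup F] [NormedSpace ℝ F]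

theorem hasFDerivAt_zero_prod_single {f : ℝ → ℝ} {f' : ℝ} (j : ι) {q : ι → ℝ}
    (hf : HasDerivAt f f' (q j)) :
    HasFDerivAt (fun q : ι → ℝ => ((0 : F), Pi.single j (f (q j))))
      ((0 : (ι → ℝ) →L[ℝ] F).prod
        ((ContinuousLinearMap.single ℝ (fun _ => ℝ) j).comp (f' • ContinuousLinearMap.proj j)))
      q := by
  have hfj := HasDerivAt.comp_hasFDerivAt (f := fun q : ι → ℝ => q j) q hf
    (hasFDerivAt_apply (𝕜 := ℝ) j q)
  exact (hasFDerivAt_const 0 q).prodMk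
    ((ContinuousLinearMap.single ℝ (fun _ => ℝ) j).hasFDerivAt.comp q hfj)

end

theorem fderiv_Xvf_apply (m k : ℝ) (n : ℕ) {z : PhaseSpace} (hz : z.1 2 ≠ 0) (v : PhaseSpace) :
    fderiv ℝ (Xvf m k n) z v =
      (0, Pi.single 2 (-((n + 3 : ℕ) * (m * k ^ 2)) / z.1 2 ^ (n + 3 + 1) * v.1 2)) := by
  have hX := hasFDerivAt_zero_prod_single (F := Fin 3 → ℝ) 2
    (hasDerivAt_div_pow (m * k ^ 2) (n + 3) hz)
  refine (fderiv_comp_fst_apply hX.differentiableAt v).trans ?_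
  rw [hX.fderiv]
  simp [← Pi.single_smul']

theorem fderiv_Gam_apply_of_fst_eq_zero (M : ℝ) (i μ : ℕ) {z : PhaseSpace}
    (hz : ∀ j, 0 < z.1 j) {v : PhaseSpace} (hv : v.1 = 0) : fderiv ℝ (Gam M i μ) z v = 0 := by
  set γ : (Fin 3 → ℝ) → Fin 3 → ℝ :=
    fun q j => (1 / (3 + (i : ℝ))) * ((Ntil M j) ^ μ / (q j) ^ ((μ : ℝ) - 1))
  have hγ : DifferentiableAt ℝ γ z.1 := by
    rw [differentiableAt_pi]
    intro j
    simp only [γ]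
    fun_prop (disch := first | exact Or.inl (hz j).ne' | exact (Real.rpow_pos_of_pos (hz j) _).ne')
  rw [show Gam M i μ = fun z => (γ z.1, γ z.1) from rfl, fderiv_comp_fst_apply (hγ.prodMk hγ), hv,
    map_zero]

theorem stmt15_general (m k M : ℝ) (i μ : ℕ) :
    ∀ z : PhaseSpace, (∀ j : Fin 3, 0 < z.1 j) →
      lieB (Xvf m k i) (Gam M i μ) z = Xvf m k (i + μ) z ∧
      lieB (Xvf m k i) (Xvf m k (i + μ)) z = 0 := by
  intro z hz
  have hI : z.1 2 ≠ 0 := (hz 2).ne'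
  constructor
  · have hcoeff : (i + 3 : ℕ) * (m * k ^ 2) / z.1 2 ^ (i + 3 + 1) * (Gam M i μ z).1 2 =
        m * k ^ 2 / z.1 2 ^ (i + μ + 3) := by
      simp only [Gam, Ntil, Matrix.cons_val, one_pow, Real.rpow_sub_one hI, Real.rpow_natCast]
      field_simp
      push_cast
      ring
    rw [lieB, fderiv_Gam_apply_of_fst_eq_zero M i μ hz rfl, fderiv_Xvf_apply m k i hI, zero_sub,
      neg_div, neg_mul, Pi.single_neg, hcoeff]
    simp [Xvf]
  · rw [lieB, fderiv_Xvf_apply m k _ hI, fderiv_Xvf_apply m k _ hI]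
    simp [Xvf]

/-- `Γ_{iμ}` is a master symmetry of degree 1 for `X_i`:
`[X_i, Γ_{iμ}] = X_{i+μ}` and `[X_i, X_{i+μ}] = 0` on `{I₁,I₂,I₃ > 0}`. -/
theorem stmt15 (m k M : ℝ) (hm : 0 < m) (hk : k ≠ 0) (hM : 0 < M) (i μ : ℕ) :
    ∀ z : PhaseSpace, (∀ j : Fin 3, 0 < z.1 j) →
      lieB (Xvf m k i) (Gam M i μ) z = Xvf m k (i + μ) z ∧
      lieB (Xvf m k i) (Xvf m k (i + μ)) z = 0 :=
  stmt15_general m k M i μ
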